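/- arXiv:1503.01752 — 4 statements merged into one kernel-verified Lean document; each statement's English description precedes it below -/
import Mathlib

section
/- Let Σ be the diagonal matrix of leverage scores of √Z A and M the entrywise square of the projection matrix P = √Z A(AᵀZA)^{-1}Aᵀ√Z. Then 0 ⪯ Σ − M ⪯ Σ in the positive semidefinite order; in particular Σ − M is diagonally dominant with nonnegative diagonal. -/
/-! With `B = √Z A`, the matrix `P = B (BᵀB)⁻¹ Bᵀ` is symmetric and idempotent, hence
`P = P Pᵀ` is positive semidefinite and `P i i = ∑ j, P i j ^ 2`. So `M = P ⊙ P` is positive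
semidefinite by the Schur product theorem, and `Σ - M` is the Laplacian of the nonnegative
symmetric weights `P i j ^ 2`, whose quadratic form is `½ ∑ i j, P i j ^ 2 (x i - x j) ^ 2`. -/

open Matrix

namespace Matrix

-- Also true for singular `A`, where `A⁻¹ = 0`.
theorem nonsing_inv_mul_self_mul_nonsing_inv {n α : Type*} [Fintype n] [DecidableEq n]
    [CommRing α] (A : Matrix n n α) : A⁻¹ * A * A⁻¹ = A⁻¹ := by
  by_cases h : IsUnit A.det
  · rw [nonsing_inv_mul A h, one_mul]
  · rw [nonsing_inv_apply_not_isUnit A h, zero_mul, zero_mul]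

section Gram

variable {m n α : Type*} [Fintype m] [Fintype n] [DecidableEq n] [CommRing α]
  (B : Matrix m n α)

theorem isSymm_mul_inv_gram_mul_transpose : (B * (Bᵀ * B)⁻¹ * Bᵀ).IsSymm := by
  have hG : (Bᵀ * B)ᵀ = Bᵀ * B := by rw [transpose_mul, transpose_transpose]
  rw [IsSymm, transpose_mul, transpose_mul, transpose_transpose, transpose_nonsing_inv, hG,
    Matrix.mul_assoc]

theorem isIdempotentElem_mul_inv_gram_mul_transpose :
    IsIdempotentElem (B * (Bᵀ * B)⁻¹ * Bᵀ) := by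
  calc B * (Bᵀ * B)⁻¹ * Bᵀ * (B * (Bᵀ * B)⁻¹ * Bᵀ)
      = B * ((Bᵀ * B)⁻¹ * (Bᵀ * B) * (Bᵀ * B)⁻¹) * Bᵀ := by simp only [Matrix.mul_assoc]
    _ = B * (Bᵀ * B)⁻¹ * Bᵀ := by rw [nonsing_inv_mul_self_mul_nonsing_inv]

end Gram

variable {ι : Type*} [Fintype ι]

theorem posSemidef_diagonal_sum_sub [DecidableEq ι] {W : Matrix ι ι ℝ} (hW : W.IsSymm)
    (hW0 : ∀ i j, 0 ≤ W i j) :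
    (diagonal (fun i => ∑ j, W i j) - W).PosSemidef := by
  have hWij : ∀ i j, W j i = W i j := fun i j => hW.apply i j
  refine posSemidef_iff_dotProduct_mulVec.mpr ⟨?_, fun x => ?_⟩
  · rw [IsHermitian, conjTranspose_eq_transpose_of_trivial, transpose_sub, diagonal_transpose, hW]
  · have hswap : ∑ i, ∑ j, W i j * x j ^ 2 = ∑ i, ∑ j, W i j * x i ^ 2 := by
      rw [Finset.sum_comm]; simp only [hWij]
    have hq : star x ⬝ᵥ (diagonal (fun i => ∑ j, W i j) - W) *ᵥ x
        = ∑ i, ∑ j, W i j * x i ^ 2 - ∑ i, ∑ j, x i * W i j * x j := by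
      rw [star_trivial, sub_mulVec, dotProduct_sub]
      congr 1 <;> refine Finset.sum_congr rfl fun i _ => ?_
      · simp only [mulVec_diagonal, Finset.sum_mul, Finset.mul_sum]
        exact Finset.sum_congr rfl fun j _ => by ring
      · simp only [mulVec, dotProduct, Finset.mul_sum, mul_assoc]
    have hform : 2 * (star x ⬝ᵥ (diagonal (fun i => ∑ j, W i j) - W) *ᵥ x)
        = ∑ i, ∑ j, W i j * (x i - x j) ^ 2 := by
      have hexp : ∀ i j, W i j * (x i - x j) ^ 2
          = W i j * x i ^ 2 + W i j * x j ^ 2 - 2 * (x i * W i j * x j) := fun i j => by ring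
      simp only [hq, hexp, Finset.sum_sub_distrib, Finset.sum_add_distrib, hswap, ← Finset.mul_sum]
      ring
    have : 0 ≤ ∑ i, ∑ j, W i j * (x i - x j) ^ 2 :=
      Finset.sum_nonneg fun i _ => Finset.sum_nonneg fun j _ => mul_nonneg (hW0 i j) (sq_nonneg _)
    linarith

namespace IsSymm

variable {P : Matrix ι ι ℝ}

theorem posSemidef_of_isIdempotentElem (hP : P.IsSymm) (hP2 : IsIdempotentElem P) :
    P.PosSemidef := by
  have h := posSemidef_self_mul_conjTranspose P
  rwa [conjTranspose_eq_transpose_of_trivial, hP.eq, hP2.eq] at h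

theorem apply_self_eq_sum_sq_of_isIdempotentElem (hP : P.IsSymm) (hP2 : IsIdempotentElem P)
    (i : ι) : P i i = ∑ j, P i j ^ 2 := by
  conv_lhs => rw [← hP2.eq]
  simp only [mul_apply, sq, ← hP.apply i]

theorem posSemidef_diagonal_sub_hadamard_self [DecidableEq ι] (hP : P.IsSymm)
    (hP2 : IsIdempotentElem P) :
    (diagonal (fun i => P i i) - P ⊙ P).PosSemidef := by
  have hdiag : (fun i => P i i) = fun i => ∑ j, (P ⊙ P) i j := by
    ext i; simp only [hP.apply_self_eq_sum_sq_of_isIdempotentElem hP2, hadamard_apply, sq]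
  rw [hdiag]
  refine posSemidef_diagonal_sum_sub ?_ fun i j => mul_self_nonneg (P i j)
  rw [IsSymm, transpose_hadamard, hP.eq]

end IsSymm

end Matrix

theorem sigma_minus_M_psd_general {n d : ℕ} (A : Matrix (Fin n) (Fin d) ℝ)
    (z : Fin n → ℝ) (hz : ∀ i, 0 < z i) :
    letI P : Matrix (Fin n) (Fin n) ℝ :=
      Matrix.diagonal (fun i => Real.sqrt (z i)) * A *
        (Aᵀ * Matrix.diagonal z * A)⁻¹ * Aᵀ *
        Matrix.diagonal (fun i => Real.sqrt (z i))
    letI M : Matrix (Fin n) (Fin n) ℝ := fun i j => (P i j) ^ 2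
    letI Sg : Matrix (Fin n) (Fin n) ℝ := Matrix.diagonal (fun i => P i i)
    (Sg - M).PosSemidef ∧ (Sg - (Sg - M)).PosSemidef := by
  set P : Matrix (Fin n) (Fin n) ℝ :=
    diagonal (fun i => √(z i)) * A * (Aᵀ * diagonal z * A)⁻¹ * Aᵀ * diagonal (fun i => √(z i))
  set B := diagonal (fun i => √(z i)) * A
  have hgram : Bᵀ * B = Aᵀ * diagonal z * A := by
    have hsq : (fun i => √(z i) * √(z i)) = z := funext fun i => Real.mul_self_sqrt (hz i).le
    rw [transpose_mul, diagonal_transpose, Matrix.mul_assoc, ← Matrix.mul_assoc (diagonal _),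
      diagonal_mul_diagonal, hsq, Matrix.mul_assoc]
  have hPB : P = B * (Bᵀ * B)⁻¹ * Bᵀ := by
    rw [hgram, transpose_mul, diagonal_transpose]
    simp only [P, B, Matrix.mul_assoc]
  have hsymm : P.IsSymm := hPB ▸ isSymm_mul_inv_gram_mul_transpose B
  have hidem : IsIdempotentElem P := hPB ▸ isIdempotentElem_mul_inv_gram_mul_transpose B
  have hM : (fun i j => P i j ^ 2 : Matrix (Fin n) (Fin n) ℝ) = P ⊙ P := by
    ext i j; exact sq (P i j)
  have hPpsd := hsymm.posSemidef_of_isIdempotentElem hidem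
  rw [hM, sub_sub_cancel]
  exact ⟨hsymm.posSemidef_diagonal_sub_hadamard_self hidem, hPpsd.hadamard hPpsd⟩

/-- `0 ⪯ Σ − M ⪯ Σ` for the leverage score diagonal Σ and entrywise square M of the
projection matrix. -/
theorem sigma_minus_M_psd {n d : ℕ} (A : Matrix (Fin n) (Fin d) ℝ)
    (z : Fin n → ℝ) (hz : ∀ i, 0 < z i) (hA : A.rank = d) :
    letI P : Matrix (Fin n) (Fin n) ℝ :=
      Matrix.diagonal (fun i => Real.sqrt (z i)) * A *
        (Aᵀ * Matrix.diagonal z * A)⁻¹ * Aᵀ *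
        Matrix.diagonal (fun i => Real.sqrt (z i))
    letI M : Matrix (Fin n) (Fin n) ℝ := fun i j => (P i j) ^ 2
    letI Sg : Matrix (Fin n) (Fin n) ℝ := Matrix.diagonal (fun i => P i i)
    (Sg - M).PosSemidef ∧ (Sg - (Sg - M)).PosSemidef :=
  sigma_minus_M_psd_general A z hz
end

section
/- If x, y ∈ R^n_{>0} satisfy |ln x_i − ln y_i| ≤ ε for all i, then for every i the leverage scores satisfy e^{−2ε} σ_A(y)_i ≤ σ_A(x)_i ≤ e^{2ε} σ_A(y)_i, where σ_A(v)_i = [√V A(AᵀVA)^{-1}Aᵀ√V]_{ii} with V = diag(v). -/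
/-!
With `G v = Aᵀ diag(v) A`, the leverage score is `σ_A(v)_i = v_i · aᵢᵀ G(v)⁻¹ aᵢ`, where `aᵢ` is
the `i`-th row of `A`. Entrywise `y ≤ e^ε x` gives `G y ≤ e^ε G x` in the Loewner order, and
matrix inversion reverses this order, as the variational formula
`aᵀ M⁻¹ a = max_z (2 aᵀz - zᵀ M z)` shows; hence `aᵢᵀ G(x)⁻¹ aᵢ ≤ e^ε aᵢᵀ G(y)⁻¹ aᵢ`.
Together with `x_i ≤ e^ε y_i` this yields `σ_A(x)_i ≤ e^{2ε} σ_A(y)_i`, and exchanging `x` and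
`y` gives the lower bound.
-/

open Matrix

theorem Real.le_exp_mul_of_log_sub_le {x y ε : ℝ} (hy : 0 < y)
    (h : Real.log x - Real.log y ≤ ε) : x ≤ Real.exp ε * y :=
  calc x ≤ Real.exp (Real.log x) := Real.le_exp_log x
    _ ≤ Real.exp (ε + Real.log y) := Real.exp_le_exp.mpr (by linarith)
    _ = Real.exp ε * y := by rw [Real.exp_add, Real.exp_log hy]

namespace Matrix

theorem mulVec_injective_iff_rank_eq {m n K : Type*} [Fintype n] [Field K] (A : Matrix m n K) :
    Function.Injective A.mulVec ↔ A.rank = Fintype.card n := by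
  rw [mulVec_injective_iff, linearIndependent_iff_card_eq_finrank_span, rank_eq_finrank_span_cols,
    Set.finrank, eq_comm]

theorem mul_mul_transpose_apply_self {m n α : Type*} [Fintype n] [CommSemiring α]
    (A : Matrix m n α) (B : Matrix n n α) (i : m) :
    (A * B * Aᵀ) i i = A i ⬝ᵥ B *ᵥ A i := by
  rw [Matrix.mul_assoc]
  simp only [mul_apply, dotProduct, mulVec, transpose_apply]

section InverseQuadraticForm

variable {n : Type*} [Fintype n] [DecidableEq n] {M N : Matrix n n ℝ}

theorem two_mul_dotProduct_sub_le_dotProduct_inv_mulVec (hM : M.PosDef) (a z : n → ℝ) :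
    2 * (a ⬝ᵥ z) - z ⬝ᵥ M *ᵥ z ≤ a ⬝ᵥ M⁻¹ *ᵥ a := by
  set w := M⁻¹ *ᵥ a
  have hMw : M *ᵥ w = a := by
    rw [mulVec_mulVec, mul_nonsing_inv _ hM.det_pos.ne'.isUnit, one_mulVec]
  have hwM : w ᵥ* M = a := by
    rw [← (isHermitian_iff_isSymm.mp hM.isHermitian).eq, vecMul_transpose, hMw]
  have h := hM.posSemidef.dotProduct_mulVec_nonneg (z - w)
  rw [star_trivial, mulVec_sub, hMw, sub_dotProduct, dotProduct_sub, dotProduct_sub,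
    dotProduct_mulVec w, hwM] at h
  linarith [dotProduct_comm a z, dotProduct_comm a w]

theorem dotProduct_inv_mulVec_antitone (hM : M.PosDef) (hMN : (N - M).PosSemidef)
    (a : n → ℝ) : a ⬝ᵥ N⁻¹ *ᵥ a ≤ a ⬝ᵥ M⁻¹ *ᵥ a := by
  have hN : N.PosDef := by simpa using hM.add_posSemidef hMN
  set w := N⁻¹ *ᵥ a
  have hNw : N *ᵥ w = a := by
    rw [mulVec_mulVec, mul_nonsing_inv _ hN.det_pos.ne'.isUnit, one_mulVec]
  have hgap := hMN.dotProduct_mulVec_nonneg w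
  rw [star_trivial, sub_mulVec, dotProduct_sub, hNw] at hgap
  linarith [two_mul_dotProduct_sub_le_dotProduct_inv_mulVec hM a w, dotProduct_comm a w]

theorem dotProduct_inv_mulVec_le_mul (hM : M.PosDef) (hN : N.PosDef) {c : ℝ} (hc : 0 < c)
    (hMN : (c • N - M).PosSemidef) (a : n → ℝ) :
    a ⬝ᵥ N⁻¹ *ᵥ a ≤ c * (a ⬝ᵥ M⁻¹ *ᵥ a) := by
  have hinv : (c • N)⁻¹ = c⁻¹ • N⁻¹ := inv_smul' N (Units.mk0 c hc.ne') hN.det_pos.ne'.isUnit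
  have h := dotProduct_inv_mulVec_antitone hM hMN a
  rwa [hinv, smul_mulVec, dotProduct_smul, smul_eq_mul, inv_mul_le_iff₀ hc] at h

end InverseQuadraticForm

section Leverage

variable {m n : Type*} [Fintype m] [DecidableEq m]

theorem smul_transpose_mul_diagonal_mul_sub (A : Matrix m n ℝ) (v w : m → ℝ) (c : ℝ) :
    c • (Aᵀ * diagonal w * A) - Aᵀ * diagonal v * A = Aᵀ * diagonal (c • w - v) * A := by
  rw [← Matrix.smul_mul, ← Matrix.mul_smul, ← Matrix.sub_mul, ← Matrix.mul_sub, ← diagonal_smul,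
    diagonal_sub]
  rfl

variable [Fintype n]

theorem posSemidef_transpose_mul_diagonal_mul (A : Matrix m n ℝ) {v : m → ℝ}
    (hv : ∀ i, 0 ≤ v i) : (Aᵀ * diagonal v * A).PosSemidef := by
  simpa [conjTranspose_eq_transpose_of_trivial] using
    (posSemidef_diagonal_iff.mpr hv).conjTranspose_mul_mul_same A

theorem posDef_transpose_mul_diagonal_mul {A : Matrix m n ℝ} (hA : Function.Injective A.mulVec)
    {v : m → ℝ} (hv : ∀ i, 0 < v i) : (Aᵀ * diagonal v * A).PosDef := by
  simpa [conjTranspose_eq_transpose_of_trivial] using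
    (posDef_diagonal_iff.mpr hv).conjTranspose_mul_mul_same hA

variable [DecidableEq n]

noncomputable def leverageScore (A : Matrix m n ℝ) (v : m → ℝ) (i : m) : ℝ :=
  v i * (A * (Aᵀ * diagonal v * A)⁻¹ * Aᵀ) i i

theorem leverageScore_le_sq_mul {A : Matrix m n ℝ} (hA : Function.Injective A.mulVec)
    {x y : m → ℝ} (hx : ∀ j, 0 < x j) (hy : ∀ j, 0 < y j) {c : ℝ} (hc : 0 < c)
    (hxy : ∀ j, x j ≤ c * y j) (hyx : ∀ j, y j ≤ c * x j) (i : m) :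
    leverageScore A x i ≤ c ^ 2 * leverageScore A y i := by
  have hGx := posDef_transpose_mul_diagonal_mul hA hx
  have hGy := posDef_transpose_mul_diagonal_mul hA hy
  have hgap : (c • (Aᵀ * diagonal x * A) - Aᵀ * diagonal y * A).PosSemidef := by
    rw [smul_transpose_mul_diagonal_mul_sub]
    exact posSemidef_transpose_mul_diagonal_mul A fun j => by simpa [sub_nonneg] using hyx j
  have hquad := dotProduct_inv_mulVec_le_mul hGy hGx hc hgap (A i)
  have hquad_nonneg := hGx.posSemidef.inv.dotProduct_mulVec_nonneg (A i)
  rw [star_trivial] at hquad_nonneg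
  unfold leverageScore
  rw [mul_mul_transpose_apply_self, mul_mul_transpose_apply_self]
  calc x i * (A i ⬝ᵥ (Aᵀ * diagonal x * A)⁻¹ *ᵥ A i)
      ≤ c * y i * (c * (A i ⬝ᵥ (Aᵀ * diagonal y * A)⁻¹ *ᵥ A i)) :=
        mul_le_mul (hxy i) hquad hquad_nonneg (mul_nonneg hc.le (hy i).le)
    _ = c ^ 2 * (y i * (A i ⬝ᵥ (Aᵀ * diagonal y * A)⁻¹ *ᵥ A i)) := by ring

end Leverage

end Matrix

/-- Entrywise multiplicative stability of leverage scores. -/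
theorem leverage_score_entrywise_stability {n d : ℕ} (A : Matrix (Fin n) (Fin d) ℝ)
    (hA : A.rank = d) (x y : Fin n → ℝ) (hx : ∀ i, 0 < x i) (hy : ∀ i, 0 < y i)
    (ε : ℝ) (hxy : ∀ i, |Real.log (x i) - Real.log (y i)| ≤ ε) :
    letI σ : (Fin n → ℝ) → Fin n → ℝ := fun v i =>
      v i * (A * (Aᵀ * Matrix.diagonal v * A)⁻¹ * Aᵀ) i i
    ∀ i, Real.exp (-2 * ε) * σ y i ≤ σ x i ∧ σ x i ≤ Real.exp (2 * ε) * σ y i := by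
  intro i
  have hA_inj : Function.Injective A.mulVec := by
    rw [mulVec_injective_iff_rank_eq, hA, Fintype.card_fin]
  have hx_le j : x j ≤ Real.exp ε * y j :=
    Real.le_exp_mul_of_log_sub_le (hy j) (abs_le.mp (hxy j)).2
  have hy_le j : y j ≤ Real.exp ε * x j :=
    Real.le_exp_mul_of_log_sub_le (hx j) (by linarith [(abs_le.mp (hxy j)).1])
  have hexp : Real.exp (2 * ε) = Real.exp ε ^ 2 := by rw [← Real.exp_nat_mul]; norm_num
  have upper := leverageScore_le_sq_mul hA_inj hx hy (Real.exp_pos ε) hx_le hy_le i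
  have lower := leverageScore_le_sq_mul hA_inj hy hx (Real.exp_pos ε) hy_le hx_le i
  rw [← hexp] at upper lower
  refine ⟨?_, upper⟩
  rwa [neg_mul, Real.exp_neg, inv_mul_le_iff₀ (Real.exp_pos _)]
end

section
/- Let J denote the Jacobian of the map ln z ↦ ln σ_A(z) at a point z ∈ R^n_{>0}, which equals Σ^{-1}(Σ − M) where Σ = diag(σ_A(z)) and M is the entrywise square of the projection P(z). Then for every u ∈ R^n, ‖J u‖_{σ_A(z)} ≤ ‖u‖_{σ_A(z)}, i.e. J is a contraction in the σ-norm. -/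
/-!
Write `P = P(z)`, `σ = diag P` and `D = diagonal σ`. Since `P` and `1 - P` are orthogonal
projections, both are positive semidefinite, so by the Schur product theorem so are
`M = P ⊙ P` and `D - M = P ⊙ (1 - P)`. Hence `0 ⪯ D - M ⪯ D`, and any such `B` makes `D⁻¹ B` a
contraction in the `σ`-weighted norm: for `w = D⁻¹ B u` one has `‖w‖² = wᵀBu`, and expanding
`0 ≤ (u - w)ᵀB(u - w)` with `uᵀBu ≤ ‖u‖²` and `wᵀBw ≤ ‖w‖²` gives `‖w‖² ≤ ‖u‖²`.
-/

open Matrix Finset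

namespace Matrix

section WeightedContraction

variable {ι : Type*} [Fintype ι]

theorem dotProduct_diagonal_mulVec_self {R : Type*} [CommSemiring R] [DecidableEq ι]
    (σ x : ι → R) : x ⬝ᵥ diagonal σ *ᵥ x = ∑ i, σ i * x i ^ 2 := by
  simp only [dotProduct, mulVec_diagonal]
  exact Finset.sum_congr rfl fun i _ => by ring

theorem IsHermitian.dotProduct_mulVec_comm {R : Type*} [CommSemiring R] [StarRing R]
    [TrivialStar R] {B : Matrix ι ι R} (hB : B.IsHermitian) (u w : ι → R) :
    u ⬝ᵥ B *ᵥ w = w ⬝ᵥ B *ᵥ u := by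
  rw [dotProduct_mulVec, ← vecMul_transpose, ← conjTranspose_eq_transpose_of_trivial, hB.eq,
    dotProduct_comm]

theorem sum_mul_sq_inv_diagonal_mul_mulVec_le [DecidableEq ι] {σ : ι → ℝ} (hσ : ∀ i, σ i ≠ 0)
    {B : Matrix ι ι ℝ} (hB : B.PosSemidef) (hBσ : (diagonal σ - B).PosSemidef) (u : ι → ℝ) :
    ∑ i, σ i * (((diagonal σ)⁻¹ * B) *ᵥ u) i ^ 2 ≤ ∑ i, σ i * u i ^ 2 := by
  set w := ((diagonal σ)⁻¹ * B) *ᵥ u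
  have hDw : diagonal σ *ᵥ w = B *ᵥ u := by
    have hdet : IsUnit (diagonal σ).det := by
      simpa [det_diagonal] using Finset.prod_ne_zero_iff.mpr fun i _ => hσ i
    rw [mulVec_mulVec, ← Matrix.mul_assoc, mul_nonsing_inv _ hdet, Matrix.one_mul]
  have hle : ∀ x, x ⬝ᵥ B *ᵥ x ≤ x ⬝ᵥ diagonal σ *ᵥ x := fun x => by
    have := hBσ.dotProduct_mulVec_nonneg x
    simp only [star_trivial, sub_mulVec, dotProduct_sub] at this
    linarith
  have hdiff := hB.dotProduct_mulVec_nonneg (u - w)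
  simp only [star_trivial, mulVec_sub, dotProduct_sub, sub_dotProduct] at hdiff
  rw [hB.isHermitian.dotProduct_mulVec_comm u w] at hdiff
  rw [← dotProduct_diagonal_mulVec_self, ← dotProduct_diagonal_mulVec_self]
  have hu := hle u
  have hw := hle w
  rw [hDw] at hw ⊢
  linarith

end WeightedContraction

section OrthogonalProjection

variable {ι : Type*}

theorem IsHermitian.posSemidef_of_isIdempotentElem [Fintype ι] {R : Type*} [Ring R]
    [PartialOrder R] [StarRing R] [StarOrderedRing R] {P : Matrix ι ι R} (hP : P.IsHermitian)
    (hP2 : IsIdempotentElem P) : P.PosSemidef := by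
  have := posSemidef_self_mul_conjTranspose P
  rwa [hP.eq, hP2.eq] at this

theorem hadamard_one_sub_eq_diagonal_sub [DecidableEq ι] {R : Type*} [Ring R]
    (P : Matrix ι ι R) :
    P ⊙ (1 - P) = diagonal (fun i => P i i) - P ⊙ P := by
  ext i j
  rcases eq_or_ne i j with rfl | h
  · simp [hadamard_apply, mul_sub]
  · simp [hadamard_apply, one_apply_ne h, diagonal_apply_ne _ h]

theorem IsHermitian.sum_diag_mul_sq_mulVec_le [Fintype ι] [DecidableEq ι] {P : Matrix ι ι ℝ}
    (hP : P.IsHermitian) (hP2 : IsIdempotentElem P) (hσ : ∀ i, 0 < P i i) (u : ι → ℝ) :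
    ∑ i, P i i * (((diagonal fun i => P i i)⁻¹ * (diagonal (fun i => P i i) - P ⊙ P)) *ᵥ u) i ^ 2
      ≤ ∑ i, P i i * u i ^ 2 := by
  have hPsd := hP.posSemidef_of_isIdempotentElem hP2
  have hQsd := (isHermitian_one.sub hP).posSemidef_of_isIdempotentElem hP2.one_sub
  refine sum_mul_sq_inv_diagonal_mul_mulVec_le (fun i => (hσ i).ne') ?_ ?_ u
  · rw [← hadamard_one_sub_eq_diagonal_sub]
    exact hPsd.hadamard hQsd
  · rw [sub_sub_cancel]
    exact hPsd.hadamard hPsd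

end OrthogonalProjection

theorem mulVec_injective_of_rank_eq_card {m k K : Type*} [Fintype k] [Field K]
    {A : Matrix m k K} (hA : A.rank = Fintype.card k) : Function.Injective A.mulVec :=
  mulVec_injective_iff.mpr <| linearIndependent_iff_card_eq_finrank_span.mpr <| by
    rw [← hA, rank_eq_finrank_span_cols]; rfl

theorem mulVec_injective_diagonal_mul {m k K : Type*} [Fintype m] [Fintype k] [DecidableEq m]
    [Field K] {s : m → K} (hs : ∀ i, s i ≠ 0) {A : Matrix m k K}
    (hA : Function.Injective A.mulVec) : Function.Injective (diagonal s * A).mulVec := by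
  intro x y hxy
  refine hA (funext fun i => ?_)
  simpa [← mulVec_mulVec, mulVec_diagonal, hs i] using congrFun hxy i

theorem posDef_transpose_mul_self {m k : Type*} [Fintype m] [Fintype k] {B : Matrix m k ℝ}
    (hB : Function.Injective B.mulVec) : (Bᵀ * B).PosDef := by
  simpa using PosDef.conjTranspose_mul_self B hB

section HatMatrix

variable {m k : Type*} [Fintype m] [Fintype k] [DecidableEq k]

noncomputable def hatMatrix (B : Matrix m k ℝ) : Matrix m m ℝ := B * (Bᵀ * B)⁻¹ * Bᵀ

theorem isHermitian_hatMatrix (B : Matrix m k ℝ) : (hatMatrix B).IsHermitian := by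
  simp [hatMatrix, IsHermitian, transpose_nonsing_inv, Matrix.mul_assoc]

theorem isIdempotentElem_hatMatrix {B : Matrix m k ℝ} (hB : Function.Injective B.mulVec) :
    IsIdempotentElem (hatMatrix B) := by
  have hG : IsUnit (Bᵀ * B).det :=
    (isUnit_iff_isUnit_det _).mp (posDef_transpose_mul_self hB).isUnit
  calc hatMatrix B * hatMatrix B
      = B * ((Bᵀ * B)⁻¹ * (Bᵀ * B)) * (Bᵀ * B)⁻¹ * Bᵀ := by
        simp only [hatMatrix, Matrix.mul_assoc]
    _ = hatMatrix B := by rw [nonsing_inv_mul _ hG, Matrix.mul_one, hatMatrix]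

theorem hatMatrix_apply_self_pos {B : Matrix m k ℝ} (hB : Function.Injective B.mulVec) {i : m}
    (hi : B i ≠ 0) : 0 < hatMatrix B i i := by
  have hdot : hatMatrix B i i = B i ⬝ᵥ (Bᵀ * B)⁻¹ *ᵥ B i := by
    rw [dotProduct_mulVec]; rfl
  simpa [hdot] using (posDef_transpose_mul_self hB).inv.dotProduct_mulVec_pos hi

variable [DecidableEq m]

theorem hatMatrix_diagonal_mul (s : m → ℝ) (A : Matrix m k ℝ) :
    hatMatrix (diagonal s * A) =
      diagonal s * A * (Aᵀ * diagonal (fun i => s i ^ 2) * A)⁻¹ * Aᵀ * diagonal s := by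
  simp only [hatMatrix, transpose_mul, diagonal_transpose, Matrix.mul_assoc,
    ← diagonal_mul_diagonal, sq]

end HatMatrix

end Matrix

/-- The Jacobian `J = Σ⁻¹(Σ − M)` of `ln z ↦ ln σ_A(z)` is a contraction in the
σ-norm. -/
theorem jacobian_contraction {n d : ℕ} (A : Matrix (Fin n) (Fin d) ℝ)
    (hA : A.rank = d) (hrows : ∀ i, (fun j => A i j) ≠ 0)
    (z : Fin n → ℝ) (hz : ∀ i, 0 < z i) :
    letI P : Matrix (Fin n) (Fin n) ℝ :=
      Matrix.diagonal (fun i => Real.sqrt (z i)) * A *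
        (Aᵀ * Matrix.diagonal z * A)⁻¹ * Aᵀ *
        Matrix.diagonal (fun i => Real.sqrt (z i))
    letI M : Matrix (Fin n) (Fin n) ℝ := fun i j => (P i j) ^ 2
    letI σ : Fin n → ℝ := fun i => P i i
    letI J : Matrix (Fin n) (Fin n) ℝ :=
      (Matrix.diagonal σ)⁻¹ * (Matrix.diagonal σ - M)
    ∀ u : Fin n → ℝ,
      Real.sqrt (∑ i, σ i * (J.mulVec u i) ^ 2) ≤
        Real.sqrt (∑ i, σ i * (u i) ^ 2) := by
  intro u
  set s : Fin n → ℝ := fun i => Real.sqrt (z i)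
  set B := diagonal s * A
  have hs : ∀ i, s i ≠ 0 := fun i => (Real.sqrt_pos.mpr (hz i)).ne'
  have hP : B * (Aᵀ * diagonal z * A)⁻¹ * Aᵀ * diagonal s = hatMatrix B := by
    simp only [B, hatMatrix_diagonal_mul, s, Real.sq_sqrt (hz _).le]
  have hB := mulVec_injective_diagonal_mul hs
    (mulVec_injective_of_rank_eq_card (hA.trans (Fintype.card_fin d).symm))
  have hdiag : ∀ i, 0 < hatMatrix B i i := fun i =>
    hatMatrix_apply_self_pos hB fun h => hrows i <| funext fun j => by
      simpa [B, hs i] using congrFun h j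
  have hM : (fun i j => hatMatrix B i j ^ 2) = hatMatrix B ⊙ hatMatrix B := by
    ext i j; simp [hadamard_apply, sq]
  simp only [hP, hM]
  exact Real.sqrt_le_sqrt <| (isHermitian_hatMatrix B).sum_diag_mul_sq_mulVec_le
    (isIdempotentElem_hatMatrix hB) hdiag u
end

section
/- Let M be positive definite and Q a symmetric-output linear solver matrix with ‖Qb − M^{-1}b‖²_M ≤ ε‖M^{-1}b‖²_M for all b, where ε ∈ [0, 0.1]. Then e^{−4√ε} M^{-1} ⪯ Qᵀ M Q ⪯ e^{4√ε} M^{-1}. -/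
/-!
Put `x = Q b` and `y = M⁻¹ b`. Then `‖x‖²_M = bᵀ (Qᵀ M Q) b` and `‖y‖²_M = bᵀ M⁻¹ b`, and the
hypothesis says `‖x - y‖_M ≤ √ε ‖y‖_M`. By the triangle inequality for the norm induced by `M`,
`(1 - √ε) ‖y‖_M ≤ ‖x‖_M ≤ (1 + √ε) ‖y‖_M`, and for `0 ≤ s ≤ 1/2` one has
`e^{-4s} ≤ (1 - s)²` and `(1 + s)² ≤ e^{4s}`.
-/

open Matrix

namespace Real

theorem exp_neg_two_mul_le_one_sub {s : ℝ} (hs0 : 0 ≤ s) (hs : s ≤ 1 / 2) :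
    exp (-(2 * s)) ≤ 1 - s := by
  rw [exp_neg, inv_le_iff_one_le_mul₀ (exp_pos _)]
  calc (1 : ℝ) ≤ (1 - s) * (2 * s + 1) := by nlinarith
    _ ≤ (1 - s) * exp (2 * s) :=
      mul_le_mul_of_nonneg_left (add_one_le_exp _) (by linarith)

theorem exp_neg_four_mul_le_one_sub_sq {s : ℝ} (hs0 : 0 ≤ s) (hs : s ≤ 1 / 2) :
    exp (-(4 * s)) ≤ (1 - s) ^ 2 :=
  calc exp (-(4 * s)) = exp (-(2 * s)) ^ 2 := by rw [← exp_nat_mul]; ring_nf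
    _ ≤ (1 - s) ^ 2 := by gcongr; exact exp_neg_two_mul_le_one_sub hs0 hs

theorem one_add_sq_le_exp_four_mul {s : ℝ} (hs0 : 0 ≤ s) : (1 + s) ^ 2 ≤ exp (4 * s) :=
  calc (1 + s) ^ 2 ≤ exp s ^ 2 := by gcongr; linarith [add_one_le_exp s]
    _ = exp (2 * s) := by rw [← exp_nat_mul]; ring_nf
    _ ≤ exp (4 * s) := by gcongr; linarith

end Real

open Real in
theorem sq_norm_bounds_of_sq_norm_sub_le {E : Type*} [SeminormedAddCommGroup E] {x y : E}
    {ε : ℝ} (hε0 : 0 ≤ ε) (hε : ε ≤ 1 / 4) (h : ‖x - y‖ ^ 2 ≤ ε * ‖y‖ ^ 2) :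
    exp (-(4 * √ε)) * ‖y‖ ^ 2 ≤ ‖x‖ ^ 2 ∧ ‖x‖ ^ 2 ≤ exp (4 * √ε) * ‖y‖ ^ 2 := by
  set s := √ε with hs_def
  have hs0 : 0 ≤ s := sqrt_nonneg ε
  have hs : s ≤ 1 / 2 := by
    rw [hs_def, sqrt_le_left (by norm_num)]; linarith
  have hdist : ‖x - y‖ ≤ s * ‖y‖ := by
    rwa [← sq_le_sq₀ (norm_nonneg _) (by positivity), mul_pow, sq_sqrt hε0]
  constructor
  · have hlow : (1 - s) * ‖y‖ ≤ ‖x‖ := by linarith [norm_sub_norm_le y x, norm_sub_rev x y]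
    calc exp (-(4 * s)) * ‖y‖ ^ 2 ≤ (1 - s) ^ 2 * ‖y‖ ^ 2 := by
          gcongr; exact exp_neg_four_mul_le_one_sub_sq hs0 hs
      _ = ((1 - s) * ‖y‖) ^ 2 := by ring
      _ ≤ ‖x‖ ^ 2 := by gcongr; nlinarith [norm_nonneg y]
  · have hup : ‖x‖ ≤ (1 + s) * ‖y‖ := by linarith [norm_sub_norm_le x y]
    calc ‖x‖ ^ 2 ≤ ((1 + s) * ‖y‖) ^ 2 := by gcongr
      _ = (1 + s) ^ 2 * ‖y‖ ^ 2 := by ring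
      _ ≤ exp (4 * s) * ‖y‖ ^ 2 := by gcongr; exact one_add_sq_le_exp_four_mul hs0

namespace Matrix

variable {n : Type*} [Fintype n]

-- `n → ℝ` already carries the sup norm, so the norm induced by `M` has to be named explicitly.
theorem PosSemidef.sq_norm_eq_dotProduct_mulVec {M : Matrix n n ℝ} (hM : M.PosSemidef)
    (x : n → ℝ) : @Norm.norm _ (M.toSeminormedAddCommGroup hM).toNorm x ^ 2 = x ⬝ᵥ M *ᵥ x := by
  rw [← @real_inner_self_eq_norm_sq _ (M.toSeminormedAddCommGroup hM) (M.toInnerProductSpace hM)]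
  exact dotProduct_comm _ _

open Real in
theorem PosSemidef.exp_bounds_of_dotProduct_mulVec_sub_le {M : Matrix n n ℝ} (hM : M.PosSemidef)
    {ε : ℝ} (hε0 : 0 ≤ ε) (hε : ε ≤ 1 / 4) {x y : n → ℝ}
    (h : (x - y) ⬝ᵥ M *ᵥ (x - y) ≤ ε * (y ⬝ᵥ M *ᵥ y)) :
    exp (-(4 * √ε)) * (y ⬝ᵥ M *ᵥ y) ≤ x ⬝ᵥ M *ᵥ x ∧
      x ⬝ᵥ M *ᵥ x ≤ exp (4 * √ε) * (y ⬝ᵥ M *ᵥ y) := by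
  simp only [← hM.sq_norm_eq_dotProduct_mulVec] at h ⊢
  exact @sq_norm_bounds_of_sq_norm_sub_le _ (M.toSeminormedAddCommGroup hM) x y ε hε0 hε h

theorem dotProduct_transpose_mul_mul_mulVec {R : Type*} [CommSemiring R] (M Q : Matrix n n R)
    (b : n → R) : b ⬝ᵥ (Qᵀ * M * Q) *ᵥ b = Q *ᵥ b ⬝ᵥ M *ᵥ (Q *ᵥ b) := by
  rw [← mulVec_mulVec, ← mulVec_mulVec, dotProduct_mulVec, vecMul_transpose]

theorem posSemidef_sub_of_forall_dotProduct_mulVec_le {A B : Matrix n n ℝ} (hA : A.IsHermitian)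
    (hB : B.IsHermitian) (h : ∀ x, x ⬝ᵥ A *ᵥ x ≤ x ⬝ᵥ B *ᵥ x) : (B - A).PosSemidef :=
  posSemidef_iff_dotProduct_mulVec.mpr ⟨hB.sub hA, fun x => by
    simpa [sub_mulVec, dotProduct_sub] using h x⟩

theorem PosDef.transpose_inv_mul_mul_inv [DecidableEq n] {M : Matrix n n ℝ} (hM : M.PosDef) :
    M⁻¹ᵀ * M * M⁻¹ = M⁻¹ := by
  rw [← conjTranspose_eq_transpose_of_trivial, hM.inv.isHermitian.eq,
    nonsing_inv_mul _ hM.det_pos.ne'.isUnit, one_mul]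

end Matrix
/-- A linear solver with relative error ε yields a spectral approximation of the
inverse: `e^{-4√ε} M⁻¹ ⪯ Qᵀ M Q ⪯ e^{4√ε} M⁻¹`. -/
theorem solver_implies_spectral_approx {d : ℕ} (M Q : Matrix (Fin d) (Fin d) ℝ)
    (hM : M.PosDef) (ε : ℝ) (hε0 : 0 ≤ ε) (hε1 : ε ≤ 0.1)
    (hQ : ∀ b : Fin d → ℝ,
      (Q.mulVec b - M⁻¹.mulVec b) ⬝ᵥ M.mulVec (Q.mulVec b - M⁻¹.mulVec b) ≤
        ε * (M⁻¹.mulVec b ⬝ᵥ M.mulVec (M⁻¹.mulVec b))) :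
    (Qᵀ * M * Q - Real.exp (-(4 * Real.sqrt ε)) • M⁻¹).PosSemidef ∧
      (Real.exp (4 * Real.sqrt ε) • M⁻¹ - Qᵀ * M * Q).PosSemidef := by
  have hbounds (b : Fin d → ℝ) :
      Real.exp (-(4 * √ε)) * (b ⬝ᵥ M⁻¹ *ᵥ b) ≤ b ⬝ᵥ (Qᵀ * M * Q) *ᵥ b ∧
        b ⬝ᵥ (Qᵀ * M * Q) *ᵥ b ≤ Real.exp (4 * √ε) * (b ⬝ᵥ M⁻¹ *ᵥ b) := by
    have h := hM.posSemidef.exp_bounds_of_dotProduct_mulVec_sub_le hε0 (by linarith) (hQ b)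
    rwa [← dotProduct_transpose_mul_mul_mulVec, ← dotProduct_transpose_mul_mul_mulVec,
      hM.transpose_inv_mul_mul_inv] at h
  have hQMQ : (Qᵀ * M * Q).IsHermitian := by
    simpa only [conjTranspose_eq_transpose_of_trivial] using
      isHermitian_conjTranspose_mul_mul Q hM.isHermitian
  have hMinv (c : ℝ) : (c • M⁻¹).IsHermitian := hM.inv.isHermitian.smul (IsSelfAdjoint.all c)
  refine ⟨posSemidef_sub_of_forall_dotProduct_mulVec_le (hMinv _) hQMQ fun b => ?_,
    posSemidef_sub_of_forall_dotProduct_mulVec_le hQMQ (hMinv _) fun b => ?_⟩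
  · simpa only [smul_mulVec, dotProduct_smul, smul_eq_mul] using (hbounds b).1
  · simpa only [smul_mulVec, dotProduct_smul, smul_eq_mul] using (hbounds b).2
end
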